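/- Fix α ∈ ℝ. Let F = ℝ[q_2, q_4, q_6, …] be the polynomial algebra in countably many variables q_{2k} (k ≥ 1), with the convention q_0 = 1, graded by assigning q_{2k} degree 2k+1. Let A : F → F be the linear operator A = Σ_{i,j≥1} (2i+1)(2j+1)(q_{2i+2j} − q_{2i} q_{2j}) ∂²/∂q_{2i}∂q_{2j} + 2 Σ_{i,j≥0} (2i+2j+3) q_{2i} q_{2j} ∂/∂q_{2i+2j+2} − Σ_{i≥1} (2i+1)(2i + α/2) q_{2i} ∂/∂q_{2i}; applied to any polynomial only finitely many of the summands are nonzero, so A is a well-defined linear operator on F. Then for every integer m ≥ 0 and every polynomial f ∈ F that is homogeneous of degree m with respect to the grading deg q_{2k} = 2k+1, the polynomial A f + m(m − 1 + α/2) f has degree at most m−1. In particular, on the m-th graded component A acts as multiplication by −m(m−1+α/2) modulo terms of lower degree. -/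

import Mathlib

open Finset MvPolynomial

/-- The algebra `F = ℝ[q_2, q_4, q_6, …]` is realized as `MvPolynomial ℕ ℝ`, the
variable `k` standing for `q_{2k+2}` (so the variables are `q_2, q_4, …`). The grading
assigns `q_{2k+2}` the degree `2k+3`. -/
noncomputable abbrev Falg : Type := MvPolynomial ℕ ℝ

/-- `q_{2i}` for `i ≥ 0`, with the convention `q_0 = 1`. -/
noncomputable def Q (i : ℕ) : Falg := if i = 0 then 1 else MvPolynomial.X (i - 1)

/-- The pre-generator
`A = ∑_{i,j≥1} (2i+1)(2j+1)(q_{2i+2j} − q_{2i}q_{2j}) ∂²/∂q_{2i}∂q_{2j}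
  + 2 ∑_{i,j≥0} (2i+2j+3) q_{2i} q_{2j} ∂/∂q_{2i+2j+2}
  − ∑_{i≥1} (2i+1)(2i+α/2) q_{2i} ∂/∂q_{2i}` (with `q_0 = 1`),
as a well-defined linear operator on `F`: applied to a polynomial `f`, only finitely
many summands are nonzero (all others involve a partial derivative of `f` in a variable
not occurring in `f`), so the infinite sums may be truncated to the finite sums below
without changing the value.  In the chosen indexing, `q_{2i} = X (i−1)` for `i ≥ 1` and
`∂/∂q_{2i}` is `pderiv (i−1)`. -/
noncomputable def Aop (α : ℝ) (f : Falg) : Falg :=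
  (∑ a ∈ f.vars, ∑ b ∈ f.vars,
      (((2 * a + 3) * (2 * b + 3) : ℕ) : ℝ) •
        ((MvPolynomial.X (a + b + 1) - MvPolynomial.X a * MvPolynomial.X b) *
          MvPolynomial.pderiv a (MvPolynomial.pderiv b f))) +
  (∑ i ∈ Finset.range (f.vars.sup id + 1), ∑ j ∈ Finset.range (f.vars.sup id + 1),
      ((2 * (2 * (i : ℝ) + 2 * (j : ℝ) + 3)) : ℝ) •
        (Q i * Q j * MvPolynomial.pderiv (i + j) f)) -
  ∑ a ∈ f.vars,
      ((2 * (a : ℝ) + 3) * ((2 * (a : ℝ) + 2) + α / 2)) •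
        (MvPolynomial.X a * MvPolynomial.pderiv a f)

/-!
Write `w_a = 2a + 1` for the weight of `q_{2a}`. Every summand of `A` except
`-∑ w_a w_b q_{2a} q_{2b} ∂_a ∂_b` and `-∑ w_a (w_a - 1 + α/2) q_{2a} ∂_a` lowers the weighted
degree: `q_{2a+2b} ∂_a ∂_b` changes it by `-1`, and `q_{2i} q_{2j} ∂_{i+j+1}` by at most `-1`.
For the two remaining sums, the weighted Euler identity `∑ w_a q_{2a} ∂_a g = n g` for `g` of
weighted degree `n`, applied to `g = ∂_b f` of degree `m - w_b`, turns the second-order sum into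
`∑ w_b (m - w_b) q_{2b} ∂_b f`; together with the first-order sum this is
`(m - 1 + α/2) ∑ w_b q_{2b} ∂_b f = m (m - 1 + α/2) f`, by Euler's identity once more.
-/

namespace MvPolynomial

variable {σ R : Type*}

section CommSemiring

variable [CommSemiring R] {φ : MvPolynomial σ R}

theorem mem_support_of_mem_support_pderiv {i : σ} {d : σ →₀ ℕ}
    (hd : d ∈ (pderiv i φ).support) : d + Finsupp.single i 1 ∈ φ.support := by
  rw [mem_support_iff, coeff_pderiv] at hd
  exact mem_support_iff.2 (left_ne_zero_of_mul hd)

theorem vars_pderiv_subset (i : σ) (φ : MvPolynomial σ R) : (pderiv i φ).vars ⊆ φ.vars := by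
  intro a ha
  obtain ⟨d, hd, had⟩ := (mem_vars_iff_mem_support a).1 ha
  refine (mem_vars_iff_mem_support a).2 ⟨_, mem_support_of_mem_support_pderiv hd, ?_⟩
  rw [Finsupp.mem_support_iff] at had ⊢
  simp [had]

variable {w : σ → ℕ} {n : ℕ}

theorem IsWeightedHomogeneous.weight_le_of_pderiv_ne_zero (h : φ.IsWeightedHomogeneous w n)
    {i : σ} (h0 : pderiv i φ ≠ 0) : w i ≤ n := by
  obtain ⟨d, hd, hid⟩ :=
    (mem_vars_iff_mem_support i).1 (not_imp_comm.1 pderiv_eq_zero_of_notMem_vars h0)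
  rw [← h (mem_support_iff.1 hd)]
  exact Finsupp.le_weight_of_ne_zero' w (Finsupp.mem_support_iff.1 hid)

theorem IsWeightedHomogeneous.pderiv_of_ne_zero (h : φ.IsWeightedHomogeneous w n)
    {i : σ} (h0 : pderiv i φ ≠ 0) : (pderiv i φ).IsWeightedHomogeneous w (n - w i) :=
  h.pderiv (Nat.sub_add_cancel (h.weight_le_of_pderiv_ne_zero h0))

theorem IsWeightedHomogeneous.mem_restrictSupport_weight_lt (h : φ.IsWeightedHomogeneous w n)
    {m : ℕ} (hn : n < m) : φ ∈ restrictSupport R {d | Finsupp.weight w d < m} := by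
  intro d hd
  rw [Set.mem_ofPred_eq, h (mem_support_iff.1 hd)]
  exact hn

theorem IsWeightedHomogeneous.mul_pderiv_mem_restrictSupport
    (hφ : φ.IsWeightedHomogeneous w n) {p : MvPolynomial σ R} {e : ℕ}
    (hp : p.IsWeightedHomogeneous w e) {i : σ} (he : e < w i) :
    p * pderiv i φ ∈ restrictSupport R {d | Finsupp.weight w d < n} := by
  by_cases h0 : pderiv i φ = 0
  · simp [h0]
  have hi := hφ.weight_le_of_pderiv_ne_zero h0
  exact (hp.mul (hφ.pderiv_of_ne_zero h0)).mem_restrictSupport_weight_lt (by omega)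

theorem IsWeightedHomogeneous.mul_pderiv_pderiv_mem_restrictSupport
    (hφ : φ.IsWeightedHomogeneous w n) {p : MvPolynomial σ R} {e : ℕ}
    (hp : p.IsWeightedHomogeneous w e) {i j : σ} (he : e < w i + w j) :
    p * pderiv i (pderiv j φ) ∈ restrictSupport R {d | Finsupp.weight w d < n} := by
  by_cases h0 : pderiv i (pderiv j φ) = 0
  · simp [h0]
  have hj0 : pderiv j φ ≠ 0 := fun h => h0 (by rw [h, map_zero])
  have hj := hφ.weight_le_of_pderiv_ne_zero hj0
  have hφj := hφ.pderiv_of_ne_zero hj0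
  have hi := hφj.weight_le_of_pderiv_ne_zero h0
  exact (hp.mul (hφj.pderiv_of_ne_zero h0)).mem_restrictSupport_weight_lt (by omega)

theorem IsWeightedHomogeneous.sum_weight_X_mul_pderiv_of_vars_subset
    (h : φ.IsWeightedHomogeneous w n) {S : Finset σ} (hS : φ.vars ⊆ S) :
    ∑ i ∈ S, (w i : R) • (X i * pderiv i φ) = (n : R) • φ := by
  conv_lhs => rw [φ.as_sum]
  conv_rhs => rw [φ.as_sum, Finset.smul_sum]
  simp_rw [map_sum, Finset.mul_sum, Finset.smul_sum, X_mul_pderiv_monomial]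
  rw [Finset.sum_comm]
  refine Finset.sum_congr rfl fun s hs => ?_
  have hsS : s.support ⊆ S := fun i hi => hS ((mem_vars_iff_mem_support i).2 ⟨s, hs, hi⟩)
  have hweight : ∑ i ∈ S, (w i : R) * s i = n := by
    rw [← h (mem_support_iff.1 hs), Finsupp.weight_apply,
      Finsupp.sum_of_support_subset s hsS (fun i c => c • w i) fun _ _ => zero_smul ℕ _]
    simp [mul_comm]
  simp_rw [← Nat.cast_smul_eq_nsmul R, smul_smul, ← Finset.sum_smul, hweight]

end CommSemiring

section CommRing

variable [CommRing R] {φ : MvPolynomial σ R} {w : σ → ℕ} {n : ℕ}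

theorem IsWeightedHomogeneous.sum_weight_X_mul_pderiv_pderiv
    (h : φ.IsWeightedHomogeneous w n) {S : Finset σ} (hS : φ.vars ⊆ S) (j : σ) :
    ∑ i ∈ S, (w i : R) • (X i * pderiv i (pderiv j φ)) = ((n : R) - w j) • pderiv j φ := by
  by_cases h0 : pderiv j φ = 0
  · simp [h0]
  rw [(h.pderiv_of_ne_zero h0).sum_weight_X_mul_pderiv_of_vars_subset
      ((vars_pderiv_subset j φ).trans hS), Nat.cast_sub (h.weight_le_of_pderiv_ne_zero h0)]

theorem IsWeightedHomogeneous.sum_weight_mul_weight_X_mul_X_mul_pderiv_pderiv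
    (h : φ.IsWeightedHomogeneous w n) {S : Finset σ} (hS : φ.vars ⊆ S) :
    ∑ i ∈ S, ∑ j ∈ S, ((w i * w j : ℕ) : R) • (X i * X j * pderiv i (pderiv j φ)) =
      ∑ j ∈ S, ((w j : R) * (n - w j)) • (X j * pderiv j φ) := by
  rw [Finset.sum_comm]
  refine Finset.sum_congr rfl fun j _ => ?_
  calc ∑ i ∈ S, ((w i * w j : ℕ) : R) • (X i * X j * pderiv i (pderiv j φ))
      = (w j : R) • (X j * ∑ i ∈ S, (w i : R) • (X i * pderiv i (pderiv j φ))) := by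
        simp_rw [Finset.mul_sum, Finset.smul_sum, mul_smul_comm, smul_smul]
        refine Finset.sum_congr rfl fun i _ => ?_
        rw [mul_assoc, mul_left_comm (X j), Nat.cast_mul, mul_comm]
    _ = ((w j : R) * (n - w j)) • (X j * pderiv j φ) := by
        rw [h.sum_weight_X_mul_pderiv_pderiv hS, mul_smul_comm, smul_smul]

end CommRing

end MvPolynomial

theorem isWeightedHomogeneous_Q (i : ℕ) :
    (Q i).IsWeightedHomogeneous (fun k => 2 * k + 3) (if i = 0 then 0 else 2 * i + 1) := by
  unfold Q
  split_ifs with hi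
  · exact isWeightedHomogeneous_one ℝ _
  · convert isWeightedHomogeneous_X ℝ (fun k => 2 * k + 3) (i - 1) using 1
    omega

/-- These are the terms of `A` that preserve the weighted degree (with a minus sign); on the
`m`-th graded component they act as the scalar `m(m-1+α/2)`. -/
theorem sum_X_mul_X_mul_pderiv_pderiv_add_sum_X_mul_pderiv (α : ℝ) {m : ℕ} {f : Falg}
    (hf : f.IsWeightedHomogeneous (fun k => 2 * k + 3) m) :
    (∑ a ∈ f.vars, ∑ b ∈ f.vars, (((2 * a + 3) * (2 * b + 3) : ℕ) : ℝ) •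
        (X a * X b * pderiv a (pderiv b f))) +
      ∑ a ∈ f.vars, ((2 * (a : ℝ) + 3) * ((2 * (a : ℝ) + 2) + α / 2)) • (X a * pderiv a f) =
      ((m : ℝ) * ((m : ℝ) - 1 + α / 2)) • f := by
  have second := hf.sum_weight_mul_weight_X_mul_X_mul_pderiv_pderiv (R := ℝ) subset_rfl
  have euler := hf.sum_weight_X_mul_pderiv_of_vars_subset (R := ℝ) subset_rfl
  push_cast at second euler ⊢
  rw [second, ← Finset.sum_add_distrib]
  calc ∑ a ∈ f.vars, (((2 * (a : ℝ) + 3) * (m - (2 * a + 3))) • (X a * pderiv a f) +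
          ((2 * (a : ℝ) + 3) * ((2 * a + 2) + α / 2)) • (X a * pderiv a f))
      = ((m : ℝ) - 1 + α / 2) • ∑ a ∈ f.vars, (2 * (a : ℝ) + 3) • (X a * pderiv a f) := by
        rw [Finset.smul_sum]
        refine Finset.sum_congr rfl fun a _ => ?_
        rw [← add_smul, smul_smul]
        ring_nf
    _ = ((m : ℝ) * ((m : ℝ) - 1 + α / 2)) • f := by rw [euler, smul_smul, mul_comm]

/-- **The pre-generator `A` acts on the `m`-th graded component as multiplication by
`−m(m−1+α/2)` modulo lower degree terms:** for every `f ∈ F` homogeneous of degree `m`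
(with respect to the grading `deg q_{2k} = 2k+1`), the polynomial
`A f + m(m−1+α/2) f` has (weighted) degree at most `m−1`, i.e. every monomial in its
support has weighted degree `< m`. -/
theorem Aop_triangular (α : ℝ) (m : ℕ) (f : Falg)
    (hf : MvPolynomial.IsWeightedHomogeneous (fun k => 2 * k + 3) f m) :
    ∀ d ∈ (Aop α f + (((m : ℝ) * ((m : ℝ) - 1 + α / 2))) • f).support,
      Finsupp.weight (fun k => 2 * k + 3) d < m := by
  have hsplit : Aop α f + ((m : ℝ) * ((m : ℝ) - 1 + α / 2)) • f =
      (∑ a ∈ f.vars, ∑ b ∈ f.vars, (((2 * a + 3) * (2 * b + 3) : ℕ) : ℝ) •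
          (X (a + b + 1) * pderiv a (pderiv b f))) +
        ∑ i ∈ range (f.vars.sup id + 1), ∑ j ∈ range (f.vars.sup id + 1),
          (2 * (2 * (i : ℝ) + 2 * (j : ℝ) + 3)) • (Q i * Q j * pderiv (i + j) f) := by
    rw [Aop, ← sum_X_mul_X_mul_pderiv_pderiv_add_sum_X_mul_pderiv α hf]
    simp only [sub_mul, smul_sub, Finset.sum_sub_distrib]
    abel
  suffices Aop α f + ((m : ℝ) * ((m : ℝ) - 1 + α / 2)) • f ∈
      restrictSupport ℝ {d | Finsupp.weight (fun k => 2 * k + 3) d < m} from fun d hd => this hd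
  rw [hsplit]
  refine add_mem (Submodule.sum_mem _ fun a _ => Submodule.sum_mem _ fun b _ =>
    Submodule.smul_mem _ _ ?_) (Submodule.sum_mem _ fun i _ => Submodule.sum_mem _ fun j _ =>
    Submodule.smul_mem _ _ ?_)
  · exact hf.mul_pderiv_pderiv_mem_restrictSupport (isWeightedHomogeneous_X ℝ _ _) (by omega)
  · refine hf.mul_pderiv_mem_restrictSupport
      ((isWeightedHomogeneous_Q i).mul (isWeightedHomogeneous_Q j)) ?_
    split_ifs <;> omega
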